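/- The Thue-Morse autocorrelation function η satisfies the recursions η(2m) = η(m) and η(2m+1) = -(1/2)(η(m) + η(m+1)) for all m ≥ 0, together with η(0) = 1. -/
import Mathlib


open Filter Finset

/-- Binary digit-sum of `n`. -/
def digitSum (n : ℕ) : ℕ := (Nat.digits 2 n).sum

/-- The Thue-Morse sign sequence `σ(n) = (-1)^{s(n)}`. -/
def tmSign (n : ℕ) : ℤ := (-1) ^ digitSum n

lemma digitSum_two_mul (n : ℕ) : digitSum (2 * n) = digitSum n := by
  rcases Nat.eq_zero_or_pos n with h | h
  · simp [h]
  · unfold digitSum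
    rw [Nat.digits_def' (by norm_num : 1 < 2) (by omega)]
    have h1 : 2 * n % 2 = 0 := by omega
    have h2 : 2 * n / 2 = n := by omega
    rw [h1, h2]
    simp

lemma digitSum_two_mul_add_one (n : ℕ) : digitSum (2 * n + 1) = digitSum n + 1 := by
  unfold digitSum
  rw [Nat.digits_def' (by norm_num : 1 < 2) (by omega)]
  have h1 : (2 * n + 1) % 2 = 1 := by omega
  have h2 : (2 * n + 1) / 2 = n := by omega
  rw [h1, h2]
  simp [Nat.add_comm]

lemma tmSignR_two_mul (n : ℕ) : ((tmSign (2 * n) : ℝ)) = (tmSign n : ℝ) := by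
  unfold tmSign
  rw [digitSum_two_mul]

lemma tmSignR_two_mul_add_one (n : ℕ) : ((tmSign (2 * n + 1) : ℝ)) = -(tmSign n : ℝ) := by
  unfold tmSign
  rw [digitSum_two_mul_add_one]
  push_cast
  rw [pow_succ]
  ring

lemma tmSignR_sq (n : ℕ) : ((tmSign n : ℝ)) * (tmSign n : ℝ) = 1 := by
  unfold tmSign
  push_cast
  rw [← pow_add]
  exact Even.neg_one_pow ⟨digitSum n, rfl⟩

lemma sum_range_two_mul' (g : ℕ → ℝ) (N : ℕ) :
    ∑ j ∈ range (2 * N), g j = ∑ i ∈ range N, (g (2 * i) + g (2 * i + 1)) := by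
  induction N with
  | zero => simp
  | succ n ih =>
    have h : 2 * (n + 1) = 2 * n + 1 + 1 := by ring
    rw [h, sum_range_succ, sum_range_succ, ih, sum_range_succ]
    ring

lemma tendsto_double {f : ℕ → ℝ} {L : ℝ} (h : Tendsto f atTop (nhds L)) :
    Tendsto (fun N => f (2 * N)) atTop (nhds L) :=
  h.comp (tendsto_atTop_atTop.2 fun b => ⟨b, fun a ha => by omega⟩)

lemma inv_two_mul_nat (N : ℕ) : (1 : ℝ) / ((2 * N : ℕ) : ℝ) = 1 / 2 * (1 / (N : ℝ)) := by
  push_cast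
  rw [one_div, mul_inv]
  ring

/-- If `η` is the Thue-Morse autocorrelation function, then `η(0) = 1`,
`η(2m) = η(m)` and `η(2m+1) = -(1/2)(η(m) + η(m+1))` for all `m`. -/
theorem tm_autocorrelation_recursion (η : ℕ → ℝ)
    (hη : ∀ m : ℕ, Tendsto
      (fun N : ℕ => (1 / (N : ℝ)) * ∑ i ∈ range N, (tmSign i : ℝ) * (tmSign (i + m) : ℝ))
      atTop (nhds (η m))) :
    η 0 = 1 ∧ ∀ m : ℕ, η (2 * m) = η m ∧ η (2 * m + 1) = -(1 / 2) * (η m + η (m + 1)) := by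
  constructor
  · -- η 0 = 1
    have h0 : Tendsto (fun _ : ℕ => (1 : ℝ)) atTop (nhds (η 0)) := by
      refine (hη 0).congr' ?_
      filter_upwards [eventually_ge_atTop 1] with N hN
      have hsum : ∑ i ∈ range N, (tmSign i : ℝ) * (tmSign (i + 0) : ℝ) = N := by
        rw [Finset.sum_congr rfl (fun i _ => by rw [Nat.add_zero, tmSignR_sq])]
        simp
      rw [hsum]
      have : (N : ℝ) ≠ 0 := by positivity
      field_simp
    exact tendsto_nhds_unique h0 tendsto_const_nhds
  · intro m
    constructor
    · -- η (2m) = η m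
      have key : (fun N : ℕ => (1 / ((2 * N : ℕ) : ℝ)) *
          ∑ i ∈ range (2 * N), (tmSign i : ℝ) * (tmSign (i + 2 * m) : ℝ)) =
          (fun N : ℕ => (1 / (N : ℝ)) * ∑ i ∈ range N, (tmSign i : ℝ) * (tmSign (i + m) : ℝ)) := by
        funext N
        rw [sum_range_two_mul', inv_two_mul_nat]
        have hterm : ∀ i ∈ range N,
            ((tmSign (2 * i) : ℝ) * (tmSign (2 * i + 2 * m) : ℝ) +
             (tmSign (2 * i + 1) : ℝ) * (tmSign (2 * i + 1 + 2 * m) : ℝ)) =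
            2 * ((tmSign i : ℝ) * (tmSign (i + m) : ℝ)) := by
          intro i _
          have e1 : 2 * i + 2 * m = 2 * (i + m) := by ring
          have e2 : 2 * i + 1 + 2 * m = 2 * (i + m) + 1 := by ring
          rw [e1, e2, tmSignR_two_mul, tmSignR_two_mul, tmSignR_two_mul_add_one,
            tmSignR_two_mul_add_one]
          ring
        rw [Finset.sum_congr rfl hterm, ← Finset.mul_sum]
        ring
      have h1 := tendsto_double (hη (2 * m))
      rw [key] at h1
      exact tendsto_nhds_unique h1 (hη m)
    · -- η (2m+1) = -(1/2)(η m + η (m+1))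
      have key : (fun N : ℕ => (1 / ((2 * N : ℕ) : ℝ)) *
          ∑ i ∈ range (2 * N), (tmSign i : ℝ) * (tmSign (i + (2 * m + 1)) : ℝ)) =
          (fun N : ℕ => -(1 / 2) *
            ((1 / (N : ℝ)) * ∑ i ∈ range N, (tmSign i : ℝ) * (tmSign (i + m) : ℝ) +
             (1 / (N : ℝ)) * ∑ i ∈ range N, (tmSign i : ℝ) * (tmSign (i + (m + 1)) : ℝ))) := by
        funext N
        rw [sum_range_two_mul', inv_two_mul_nat]
        have hterm : ∀ i ∈ range N,
            ((tmSign (2 * i) : ℝ) * (tmSign (2 * i + (2 * m + 1)) : ℝ) +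
             (tmSign (2 * i + 1) : ℝ) * (tmSign (2 * i + 1 + (2 * m + 1)) : ℝ)) =
            -((tmSign i : ℝ) * (tmSign (i + m) : ℝ)) +
            -((tmSign i : ℝ) * (tmSign (i + (m + 1)) : ℝ)) := by
          intro i _
          have e1 : 2 * i + (2 * m + 1) = 2 * (i + m) + 1 := by ring
          have e2 : 2 * i + 1 + (2 * m + 1) = 2 * (i + (m + 1)) := by ring
          rw [e1, e2]
          simp only [tmSignR_two_mul, tmSignR_two_mul_add_one]
          ring
        rw [Finset.sum_congr rfl hterm, Finset.sum_add_distrib, Finset.sum_neg_distrib,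
          Finset.sum_neg_distrib]
        ring
      have h1 := tendsto_double (hη (2 * m + 1))
      rw [key] at h1
      have h2 : Tendsto (fun N : ℕ => -(1 / 2) *
            ((1 / (N : ℝ)) * ∑ i ∈ range N, (tmSign i : ℝ) * (tmSign (i + m) : ℝ) +
             (1 / (N : ℝ)) * ∑ i ∈ range N, (tmSign i : ℝ) * (tmSign (i + (m + 1)) : ℝ)))
          atTop (nhds (-(1 / 2) * (η m + η (m + 1)))) :=
        ((hη m).add (hη (m + 1))).const_mul _
      exact tendsto_nhds_unique h1 h2
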